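/- Let F be a holomorphic self-mapping of 𝔻 with Denjoy–Wolff point a = 1, i.e. the angular limit of F at 1 equals 1 and the angular derivative F'(1) = ∠lim_{z→1} (F(z) − 1)/(z − 1) exists and satisfies F'(1) ≤ 1, and assume F(0) ≠ 0. Let ζ_1, …, ζ_N be pairwise distinct boundary regular fixed points of F different from 1, i.e. the angular limit of F at ζ_n equals ζ_n and F'(ζ_n) = ∠lim_{z→ζ_n} (F(z) − ζ_n)/(z − ζ_n) exists finitely (and then F'(ζ_n) > 1 for each n). Then Σ_{n=1}^{N} |1 − ζ_n|²/(F'(ζ_n) − 1) ≤ 2·Re(1/F(0) − 1). -/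

import Mathlib

/-!
Julia's lemma at the Denjoy–Wolff point `1`, together with `F'(1) ≤ 1`, says that
`ψ = 1 / (1 - F) - 1 / (1 - z)` has nonnegative real part. As `F 0 ≠ 0`, the open mapping theorem
keeps `ψ` away from `0`, so `F` has no fixed point in `𝔻` and `Θ = 1 / ψ = (1 - z)(1 - F) / (F - z)`
is holomorphic with `Re Θ ≥ 0`. At a boundary fixed point `ζ` with `F'(ζ) = d`, the radial residue
`(1 - t) Θ(t ζ)` tends to `γ = |1 - ζ|² / (d - 1)`, and Julia's lemma for functions of nonnegative
real part lets us subtract `γ / 2 · (ζ + z) / (ζ - z)` from `Θ` without losing `Re ≥ 0`. Doing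
this at every `ζ_n` and evaluating the real part at `0`, where the Poisson kernel is `1` and
`Θ 0 = 1 / F 0 - 1`, gives the inequality.
-/

open Complex Filter Metric Finset

noncomputable section

/-- The Stolz angle at a boundary point `ζ` with opening parameter `M`. -/
def StolzAngle (ζ : ℂ) (M : ℝ) : Set ℂ :=
  {z : ℂ | ‖z‖ < 1 ∧ ‖ζ - z‖ < M * (1 - ‖z‖)}

/-- Angular (nontangential) limit of `h` at `ζ` equals `L`: within every Stolz
angle `S(ζ, M)`, `M > 1`, the function tends to `L`. -/
def AngularLimit (h : ℂ → ℂ) (ζ : ℂ) (L : ℂ) : Prop :=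
  ∀ M : ℝ, 1 < M → Tendsto h (nhdsWithin ζ (StolzAngle ζ M)) (nhds L)

/-- Angular limit of `h` at `ζ` is `∞`: `|h|` tends to `+∞` within every Stolz angle. -/
def AngularLimitInfty (h : ℂ → ℂ) (ζ : ℂ) : Prop :=
  ∀ M : ℝ, 1 < M → Tendsto (fun z => ‖h z‖) (nhdsWithin ζ (StolzAngle ζ M)) atTop

open Topology ComplexConjugate

local notation "𝔻" => ball (0 : ℂ) 1

def mobius (w z : ℂ) : ℂ := (z - w) / (1 - conj w * z)

lemma mem_unitDisc_iff_normSq_lt_one {z : ℂ} : z ∈ 𝔻 ↔ normSq z < 1 := by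
  rw [mem_ball_zero_iff, normSq_eq_norm_sq, sq_lt_one_iff₀ (norm_nonneg z)]

lemma neg_mem_unitDisc {w : ℂ} (hw : w ∈ 𝔻) : -w ∈ 𝔻 := by
  rwa [mem_ball_zero_iff, norm_neg, ← mem_ball_zero_iff]

lemma one_sub_conj_mul_ne_zero {w z : ℂ} (hw : w ∈ 𝔻) (hz : z ∈ 𝔻) : 1 - conj w * z ≠ 0 := by
  rw [mem_ball_zero_iff] at hw hz
  intro h
  have : ‖conj w * z‖ = 1 := by rw [← sub_eq_zero.1 h, norm_one]
  rw [norm_mul, norm_conj] at this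
  nlinarith [norm_nonneg w, norm_nonneg z]

lemma normSq_one_sub_conj_mul_sub_normSq_sub (w z : ℂ) :
    normSq (1 - conj w * z) - normSq (z - w) = (1 - normSq w) * (1 - normSq z) := by
  simp only [normSq_apply, mul_re, mul_im, sub_re, sub_im, one_re, one_im, conj_re, conj_im]
  ring

lemma mobius_mem_unitDisc {w z : ℂ} (hw : w ∈ 𝔻) (hz : z ∈ 𝔻) : mobius w z ∈ 𝔻 := by
  rw [mobius, mem_unitDisc_iff_normSq_lt_one, map_div₀,
    div_lt_one (normSq_pos.2 (one_sub_conj_mul_ne_zero hw hz))]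
  have := normSq_one_sub_conj_mul_sub_normSq_sub w z
  rw [mem_unitDisc_iff_normSq_lt_one] at hw hz
  nlinarith

lemma mobius_neg_mobius {w z : ℂ} (hw : w ∈ 𝔻) (hz : z ∈ 𝔻) :
    mobius (-w) (mobius w z) = z := by
  have h₁ := one_sub_conj_mul_ne_zero hw hz
  have h₂ : 1 - conj w * w ≠ 0 := one_sub_conj_mul_ne_zero hw hw
  simp only [mobius, map_neg, neg_mul, sub_neg_eq_add]
  rw [div_add' _ _ _ h₁, mul_div_assoc', add_div' _ _ _ h₁, div_div_div_cancel_right₀ h₁,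
    div_eq_iff (by convert h₂ using 1; ring)]
  ring

lemma differentiableOn_mobius {w : ℂ} (hw : w ∈ 𝔻) : DifferentiableOn ℂ (mobius w) 𝔻 :=
  (differentiableOn_id.sub_const w).div ((differentiableOn_const 1).sub
    (differentiableOn_id.const_mul _)) fun _ hz => one_sub_conj_mul_ne_zero hw hz

lemma norm_le_norm_mobius_of_apply_eq_zero {f : ℂ → ℂ} (hd : DifferentiableOn ℂ f 𝔻)
    (hm : Set.MapsTo f 𝔻 𝔻) {w z : ℂ} (hw : w ∈ 𝔻) (hfw : f w = 0) (hz : z ∈ 𝔻) :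
    ‖f z‖ ≤ ‖mobius w z‖ := by
  have hφ : Set.MapsTo (mobius (-w)) 𝔻 𝔻 := fun u hu => mobius_mem_unitDisc (neg_mem_unitDisc hw) hu
  have hφ0 : mobius (-w) 0 = w := by simp [mobius]
  have hg0 : (f ∘ mobius (-w)) 0 = 0 := by simp [hφ0, hfw]
  have hschwarz := dist_le_div_mul_dist_of_mapsTo_ball
    (hd.comp (differentiableOn_mobius (neg_mem_unitDisc hw)) hφ)
    (by rw [hg0]; exact (hm.comp hφ).mono_right ball_subset_closedBall) (mobius_mem_unitDisc hw hz)
  simpa [hφ0, hfw, mobius_neg_mobius hw hz] using hschwarz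

lemma sub_ne_zero_of_norm_eq_one {ζ z : ℂ} (hζ : ‖ζ‖ = 1) (hz : z ∈ 𝔻) : ζ - z ≠ 0 := by
  rw [sub_ne_zero]
  rintro rfl
  simp [hζ] at hz

lemma normSq_add_conj_sub_normSq_sub (a b : ℂ) :
    normSq (a + conj b) - normSq (a - b) = 4 * a.re * b.re := by
  simp only [normSq_apply, add_re, add_im, sub_re, sub_im, conj_re, conj_im]
  ring

lemma re_add_div_sub_eq_poissonKernel (ζ z : ℂ) :
    ((ζ + z) / (ζ - z)).re = poissonKernel 0 z ζ := by
  simpa [herglotzRieszKernel] using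
    (congrFun (poissonKernel_eq_re_herglotzRieszKernel (c := 0) (w := z)) ζ).symm

lemma poissonKernel_zero_of_norm_eq_one {ζ : ℂ} (hζ : ‖ζ‖ = 1) (z : ℂ) :
    poissonKernel 0 z ζ = (1 - normSq z) / normSq (ζ - z) := by
  simp [poissonKernel, hζ, normSq_eq_norm_sq]

lemma poissonKernel_nonneg {ζ z : ℂ} (hζ : ‖ζ‖ = 1) (hz : z ∈ 𝔻) : 0 ≤ poissonKernel 0 z ζ := by
  rw [poissonKernel_zero_of_norm_eq_one hζ]
  exact div_nonneg (by linarith [mem_unitDisc_iff_normSq_lt_one.1 hz]) (normSq_nonneg _)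

section Radial

lemma tendsto_ofReal_nhdsLT_one : Tendsto (fun t : ℝ => (t : ℂ)) (𝓝[<] 1) (𝓝 1) :=
  (continuous_ofReal.tendsto' 1 1 ofReal_one).mono_left nhdsWithin_le_nhds

lemma tendsto_ofReal_mul_nhdsLT_one (ζ : ℂ) :
    Tendsto (fun t : ℝ => (t : ℂ) * ζ) (𝓝[<] 1) (𝓝 ζ) := by
  simpa using tendsto_ofReal_nhdsLT_one.mul_const ζ

lemma norm_ofReal_mul {ζ : ℂ} (hζ : ‖ζ‖ = 1) {t : ℝ} (ht : t ∈ Set.Ioo (0 : ℝ) 1) :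
    ‖(t : ℂ) * ζ‖ = t := by
  rw [norm_mul, hζ, mul_one, norm_real, Real.norm_of_nonneg ht.1.le]

lemma ofReal_mul_mem_unitDisc {ζ : ℂ} (hζ : ‖ζ‖ = 1) {t : ℝ} (ht : t ∈ Set.Ioo (0 : ℝ) 1) :
    (t : ℂ) * ζ ∈ 𝔻 := by
  rw [mem_ball_zero_iff, norm_ofReal_mul hζ ht]
  exact ht.2

lemma ofReal_mem_unitDisc {t : ℝ} (ht : t ∈ Set.Ioo (0 : ℝ) 1) : (t : ℂ) ∈ 𝔻 := by
  simpa using ofReal_mul_mem_unitDisc norm_one ht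

lemma ofReal_mul_mem_stolzAngle {ζ : ℂ} (hζ : ‖ζ‖ = 1) {t : ℝ} (ht : t ∈ Set.Ioo (0 : ℝ) 1) :
    (t : ℂ) * ζ ∈ StolzAngle ζ 2 := by
  have hsub : ζ - t * ζ = ((1 - t : ℝ) : ℂ) * ζ := by push_cast; ring
  refine ⟨(norm_ofReal_mul hζ ht).symm ▸ ht.2, ?_⟩
  rw [norm_ofReal_mul hζ ht, hsub, norm_mul, hζ, mul_one, norm_real,
    Real.norm_of_nonneg (by linarith [ht.2])]
  linarith [ht.2]

lemma AngularLimit.tendsto_radial {h : ℂ → ℂ} {ζ L : ℂ} (hζ : ‖ζ‖ = 1)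
    (hlim : AngularLimit h ζ L) : Tendsto (fun t : ℝ => h (t * ζ)) (𝓝[<] 1) (𝓝 L) :=
  (hlim 2 one_lt_two).comp <| tendsto_nhdsWithin_iff.2 ⟨tendsto_ofReal_mul_nhdsLT_one ζ,
    mem_of_superset (Ioo_mem_nhdsLT zero_lt_one) fun _ ht => ofReal_mul_mem_stolzAngle hζ ht⟩

end Radial

section NonnegRe

variable {Θ : ℂ → ℂ}

lemma re_pos_or_eqOn_const_of_re_nonneg {U : Set ℂ} (hU : IsOpen U) (hUc : IsPreconnected U)
    (hd : DifferentiableOn ℂ Θ U) (hre : ∀ z ∈ U, 0 ≤ (Θ z).re) :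
    (∀ z ∈ U, 0 < (Θ z).re) ∨ ∃ c, ∀ z ∈ U, Θ z = c := by
  rcases (hd.analyticOnNhd hU).is_constant_or_isOpen hUc with hconst | hopen
  · exact Or.inr hconst
  · refine Or.inl fun z hz => ?_
    have hsub : Θ '' U ⊆ interior {w : ℂ | 0 ≤ w.re} :=
      (hopen U subset_rfl hU).subset_interior_iff.2 (Set.image_subset_iff.2 hre)
    rw [interior_setOfPred_le_re] at hsub
    exact hsub ⟨z, hz, rfl⟩

/-- Schwarz–Pick lemma for functions of nonnegative real part: unless `Θ` is constant,
`(Θ - Θ w) / (Θ + conj (Θ w))` maps `𝔻` into itself and vanishes at `w`. -/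
lemma normSq_sub_mul_le_of_re_nonneg (hd : DifferentiableOn ℂ Θ 𝔻)
    (hre : ∀ u ∈ 𝔻, 0 ≤ (Θ u).re) {z w : ℂ} (hz : z ∈ 𝔻) (hw : w ∈ 𝔻) :
    normSq (Θ z - Θ w) * ((1 - normSq w) * (1 - normSq z))
      ≤ 4 * (Θ z).re * (Θ w).re * normSq (z - w) := by
  rcases re_pos_or_eqOn_const_of_re_nonneg isOpen_ball (convex_ball 0 1).isPreconnected hd hre
    with hpos | ⟨c, hc⟩
  swap
  · rw [hc z hz, hc w hw, sub_self, map_zero, zero_mul]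
    have hc₀ : 0 ≤ c.re := hc w hw ▸ hre w hw
    have := normSq_nonneg (z - w)
    positivity
  have hden : ∀ u ∈ 𝔻, Θ u + conj (Θ w) ≠ 0 := fun u hu h => by
    have := congrArg re h
    simp only [add_re, conj_re, zero_re] at this
    linarith [hpos u hu, hpos w hw]
  have hnormSq : ∀ u ∈ 𝔻, normSq (Θ u - Θ w) < normSq (Θ u + conj (Θ w)) := fun u hu => by
    have := normSq_add_conj_sub_normSq_sub (Θ u) (Θ w)
    nlinarith [hpos u hu, hpos w hw]
  have hschwarz := norm_le_norm_mobius_of_apply_eq_zero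
    (f := fun u => (Θ u - Θ w) / (Θ u + conj (Θ w)))
    ((hd.sub_const _).div (hd.add_const _) hden)
    (fun u hu => by
      rw [mem_unitDisc_iff_normSq_lt_one, map_div₀, div_lt_one (normSq_pos.2 (hden u hu))]
      exact hnormSq u hu)
    hw (by simp) hz
  have hsq := pow_le_pow_left₀ (norm_nonneg _) hschwarz 2
  simp only [mobius, norm_div, div_pow, ← normSq_eq_norm_sq] at hsq
  rw [div_le_div_iff₀ (normSq_pos.2 (hden z hz))
    (normSq_pos.2 (one_sub_conj_mul_ne_zero hw hz))] at hsq
  have h₁ := normSq_add_conj_sub_normSq_sub (Θ z) (Θ w)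
  have h₂ := normSq_one_sub_conj_mul_sub_normSq_sub w z
  linear_combination hsq - normSq (Θ z - Θ w) * h₂ + normSq (z - w) * h₁

lemma normSq_one_sub_mul_sub_mul_le_of_re_nonneg (hd : DifferentiableOn ℂ Θ 𝔻)
    (hre : ∀ u ∈ 𝔻, 0 ≤ (Θ u).re) {ζ z : ℂ} (hζ : ‖ζ‖ = 1) (hz : z ∈ 𝔻) {t : ℝ}
    (ht : t ∈ Set.Ioo (0 : ℝ) 1) :
    normSq (((1 - t : ℝ) : ℂ) * Θ z - ((1 - t : ℝ) : ℂ) * Θ (t * ζ)) * ((1 + t) * (1 - normSq z))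
      ≤ 4 * (Θ z).re * (((1 - t : ℝ) : ℂ) * Θ (t * ζ)).re * normSq (z - t * ζ) := by
  have h := normSq_sub_mul_le_of_re_nonneg hd hre hz (ofReal_mul_mem_unitDisc hζ ht)
  rw [normSq_eq_norm_sq ((t : ℂ) * ζ), norm_ofReal_mul hζ ht] at h
  rw [← mul_sub, normSq_mul, normSq_ofReal, re_ofReal_mul]
  have h1t : 0 ≤ 1 - t := by linarith [ht.2]
  nlinarith [mul_le_mul_of_nonneg_left h h1t]

/-- Julia's lemma for functions of nonnegative real part. -/
theorem mul_poissonKernel_le_re_of_tendsto (hd : DifferentiableOn ℂ Θ 𝔻)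
    (hre : ∀ u ∈ 𝔻, 0 ≤ (Θ u).re) {ζ : ℂ} (hζ : ‖ζ‖ = 1) {γ : ℝ}
    (hlim : Tendsto (fun t : ℝ => ((1 - t : ℝ) : ℂ) * Θ (t * ζ)) (𝓝[<] 1) (𝓝 γ))
    {z : ℂ} (hz : z ∈ 𝔻) : γ / 2 * poissonKernel 0 z ζ ≤ (Θ z).re := by
  have hIoo : ∀ᶠ t in 𝓝[<] (1 : ℝ), t ∈ Set.Ioo (0 : ℝ) 1 := Ioo_mem_nhdsLT zero_lt_one
  have hpair : Tendsto (fun t : ℝ => (t, ((1 - t : ℝ) : ℂ) * Θ (t * ζ))) (𝓝[<] 1)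
      (𝓝 ((1 : ℝ), (γ : ℂ))) :=
    (tendsto_nhdsWithin_of_tendsto_nhds tendsto_id).prodMk_nhds hlim
  have hγ : 0 ≤ γ := by
    have hre_lim := (continuous_re.tendsto _).comp hlim
    rw [ofReal_re] at hre_lim
    refine ge_of_tendsto hre_lim ?_
    filter_upwards [hIoo] with t ht
    rw [Function.comp_apply, re_ofReal_mul]
    exact mul_nonneg (by linarith [ht.2]) (hre _ (ofReal_mul_mem_unitDisc hζ ht))
  have hL := ((by fun_prop : Continuous fun p : ℝ × ℂ =>
    normSq (((1 - p.1 : ℝ) : ℂ) * Θ z - p.2) * ((1 + p.1) * (1 - normSq z))).tendsto _).comp hpair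
  have hR := ((by fun_prop : Continuous fun p : ℝ × ℂ =>
    4 * (Θ z).re * p.2.re * normSq (z - p.1 * ζ)).tendsto _).comp hpair
  have hkey := le_of_tendsto_of_tendsto hL hR <| by
    filter_upwards [hIoo] with t ht
    exact normSq_one_sub_mul_sub_mul_le_of_re_nonneg hd hre hζ hz ht
  simp only [sub_self, ofReal_zero, zero_mul, zero_sub, normSq_neg,
    normSq_ofReal, ofReal_re, ofReal_one, one_mul] at hkey
  have hζz : 0 < normSq (ζ - z) := normSq_pos.2 <| sub_ne_zero.2 fun h => by
    rw [h] at hζ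
    simp [hζ] at hz
  rw [poissonKernel_zero_of_norm_eq_one hζ, ← mul_div_assoc, div_le_iff₀ hζz,
    ← normSq_neg (ζ - z), neg_sub]
  rcases hγ.eq_or_lt with rfl | hγ
  · simpa using mul_nonneg (hre z hz) (normSq_nonneg (z - ζ))
  · nlinarith

lemma norm_ofReal_one_sub_mul_le_of_re_nonneg (hd : DifferentiableOn ℂ Θ 𝔻)
    (hre : ∀ u ∈ 𝔻, 0 ≤ (Θ u).re) {ζ : ℂ} (hζ : ‖ζ‖ = 1) {t : ℝ} (ht : t ∈ Set.Ioo (0 : ℝ) 1) :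
    ‖((1 - t : ℝ) : ℂ) * Θ (t * ζ)‖ ≤ 6 * ‖Θ 0‖ := by
  have h := normSq_one_sub_mul_sub_mul_le_of_re_nonneg hd hre hζ (mem_ball_self one_pos) ht
  set E := ((1 - t : ℝ) : ℂ) * Θ (t * ζ)
  rw [zero_sub, normSq_neg, normSq_eq_norm_sq (_ * ζ), norm_ofReal_mul hζ ht, normSq_zero, sub_zero,
    mul_one, normSq_eq_norm_sq] at h
  have h1t : ‖((1 - t : ℝ) : ℂ) * Θ 0‖ = (1 - t) * ‖Θ 0‖ := by
    rw [norm_mul, norm_real, Real.norm_of_nonneg (by linarith [ht.2])]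
  have hE : ‖E‖ - (1 - t) * ‖Θ 0‖ ≤ ‖((1 - t : ℝ) : ℂ) * Θ 0 - E‖ := by
    linarith [norm_sub_norm_le E (((1 - t : ℝ) : ℂ) * Θ 0),
      norm_sub_rev E (((1 - t : ℝ) : ℂ) * Θ 0)]
  have hreE : (Θ 0).re * E.re ≤ ‖Θ 0‖ * ‖E‖ := (le_abs_self _).trans <| by
    rw [abs_mul]
    exact mul_le_mul (abs_re_le_norm _) (abs_re_le_norm _) (abs_nonneg _) (norm_nonneg _)
  set D := ‖((1 - t : ℝ) : ℂ) * Θ 0 - E‖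
  have hsq : D ^ 2 ≤ 4 * ‖Θ 0‖ * ‖E‖ := by
    have ht2 : t ^ 2 ≤ 1 := by nlinarith [ht.1, ht.2]
    calc D ^ 2 ≤ D ^ 2 * (1 + t) := le_mul_of_one_le_right (sq_nonneg D) (by linarith [ht.1])
      _ ≤ 4 * ((Θ 0).re * E.re) * t ^ 2 := by linarith
      _ ≤ 4 * (‖Θ 0‖ * ‖E‖) * 1 := by gcongr
      _ = 4 * ‖Θ 0‖ * ‖E‖ := by ring
  -- `(x - a)² ≤ 4 a x` forces `x ≤ (3 + 2 √2) a`, for `x = ‖E‖` and `a = ‖Θ 0‖`.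
  by_contra! hbig
  have hA := norm_nonneg (Θ 0)
  have hsub : (‖E‖ - ‖Θ 0‖) ^ 2 ≤ D ^ 2 :=
    pow_le_pow_left₀ (by linarith) (by nlinarith [ht.1, ht.2]) 2
  nlinarith

end NonnegRe

lemma tendsto_ofReal_one_sub_mul_sub_of_continuousAt {Θ g : ℂ → ℂ} {ξ γ : ℂ}
    (hlim : Tendsto (fun t : ℝ => ((1 - t : ℝ) : ℂ) * Θ (t * ξ)) (𝓝[<] 1) (𝓝 γ))
    (hg : ContinuousAt g ξ) :
    Tendsto (fun t : ℝ => ((1 - t : ℝ) : ℂ) * (Θ (t * ξ) - g (t * ξ))) (𝓝[<] 1) (𝓝 γ) := by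
  have h1t : Tendsto (fun t : ℝ => ((1 - t : ℝ) : ℂ)) (𝓝[<] 1) (𝓝 0) := by
    simpa using (tendsto_const_nhds (x := (1 : ℂ))).sub tendsto_ofReal_nhdsLT_one
  simpa [mul_sub] using hlim.sub (h1t.mul (hg.tendsto.comp (tendsto_ofReal_mul_nhdsLT_one ξ)))

/-- Each boundary point with a radial residue lets us subtract a multiple of the Herglotz kernel
from `Θ` while keeping its real part nonnegative. -/
theorem sum_mul_poissonKernel_le_re {ι : Type*} (s : Finset ι) {Θ : ℂ → ℂ}
    (hd : DifferentiableOn ℂ Θ 𝔻) (hre : ∀ u ∈ 𝔻, 0 ≤ (Θ u).re) {ζ : ι → ℂ}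
    (hζ : ∀ i ∈ s, ‖ζ i‖ = 1) (hinj : Set.InjOn ζ s) {γ : ι → ℝ}
    (hlim : ∀ i ∈ s, Tendsto (fun t : ℝ => ((1 - t : ℝ) : ℂ) * Θ (t * ζ i)) (𝓝[<] 1) (𝓝 (γ i)))
    {z : ℂ} (hz : z ∈ 𝔻) : ∑ i ∈ s, γ i / 2 * poissonKernel 0 z (ζ i) ≤ (Θ z).re := by
  classical
  induction s using Finset.induction_on generalizing Θ with
  | empty => simpa using hre z hz
  | @insert n s hn ih =>
    have hζn := hζ n (mem_insert_self n s)
    set Θ' := fun u => Θ u - ((γ n / 2 : ℝ) : ℂ) * ((ζ n + u) / (ζ n - u))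
    have hre' : ∀ u, (Θ' u).re = (Θ u).re - γ n / 2 * poissonKernel 0 u (ζ n) := fun u => by
      simp only [Θ', sub_re, re_ofReal_mul, re_add_div_sub_eq_poissonKernel]
    have hd' : DifferentiableOn ℂ Θ' 𝔻 :=
      hd.sub <| (differentiableOn_const _).mul <|
        ((differentiableOn_const _).add differentiableOn_id).div
        ((differentiableOn_const _).sub differentiableOn_id)
        fun _ hu => sub_ne_zero_of_norm_eq_one hζn hu
    have hre'_nonneg : ∀ u ∈ 𝔻, 0 ≤ (Θ' u).re := fun u hu => by
      rw [hre']
      linarith [mul_poissonKernel_le_re_of_tendsto hd hre hζn (hlim n (mem_insert_self n s)) hu]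
    have hlim' : ∀ i ∈ s, Tendsto (fun t : ℝ => ((1 - t : ℝ) : ℂ) * Θ' (t * ζ i)) (𝓝[<] 1)
        (𝓝 (γ i)) := fun i hi => by
      have hne : ζ n - ζ i ≠ 0 := sub_ne_zero.2 fun h =>
        hn (hinj (mem_insert_self n s) (mem_insert_of_mem hi) h ▸ hi)
      exact tendsto_ofReal_one_sub_mul_sub_of_continuousAt
        (g := fun u => ((γ n / 2 : ℝ) : ℂ) * ((ζ n + u) / (ζ n - u)))
        (hlim i (mem_insert_of_mem hi))
        (continuousAt_const.mul ((continuousAt_const.add continuousAt_id).div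
          (continuousAt_const.sub continuousAt_id) hne))
    have := ih hd' hre'_nonneg (fun i hi => hζ i (mem_insert_of_mem hi))
      (hinj.mono (by simp)) hlim'
    rw [sum_insert hn]
    linarith [hre' z]

section SelfMap

variable {F : ℂ → ℂ}

lemma differentiableOn_cayley (hF : DifferentiableOn ℂ F 𝔻) (hmaps : Set.MapsTo F 𝔻 𝔻) :
    DifferentiableOn ℂ (fun z => (1 + F z) / (1 - F z)) 𝔻 :=
  ((differentiableOn_const 1).add hF).div ((differentiableOn_const 1).sub hF)
    fun _ hz => sub_ne_zero_of_norm_eq_one norm_one (hmaps hz)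

lemma re_cayley_nonneg (hmaps : Set.MapsTo F 𝔻 𝔻) {z : ℂ} (hz : z ∈ 𝔻) :
    0 ≤ ((1 + F z) / (1 - F z)).re :=
  re_add_div_sub_eq_poissonKernel 1 (F z) ▸ poissonKernel_nonneg norm_one (hmaps hz)

lemma ofReal_one_sub_mul_cayley {w : ℂ} (hw : w ≠ 1) {t : ℝ} (ht : t ≠ 1) :
    ((1 - t : ℝ) : ℂ) * ((1 + w) / (1 - w)) = (1 + w) / ((w - 1) / (t - 1)) := by
  have ht' : (t : ℂ) - 1 ≠ 0 := sub_ne_zero.2 (by exact_mod_cast ht)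
  have hw' : w - 1 ≠ 0 := sub_ne_zero.2 hw
  have hw'' : 1 - w ≠ 0 := sub_ne_zero.2 hw.symm
  push_cast
  field_simp
  ring

lemma pos_of_angularLimit_deriv (hF : DifferentiableOn ℂ F 𝔻) (hmaps : Set.MapsTo F 𝔻 𝔻)
    (hlim : AngularLimit F 1 1) {α : ℝ}
    (hα : AngularLimit (fun z => (F z - 1) / (z - 1)) 1 α) : 0 < α := by
  have hq := hα.tendsto_radial norm_one
  have hF1 := hlim.tendsto_radial norm_one
  simp only [mul_one] at hq hF1
  have hIoo : ∀ᶠ t in 𝓝[<] (1 : ℝ), t ∈ Set.Ioo (0 : ℝ) 1 := Ioo_mem_nhdsLT zero_lt_one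
  have hFt : ∀ t ∈ Set.Ioo (0 : ℝ) 1, F t ∈ 𝔻 := fun t ht => hmaps (ofReal_mem_unitDisc ht)
  have hα₀ : 0 ≤ α := by
    have hre_lim := (continuous_re.tendsto _).comp hq
    rw [ofReal_re] at hre_lim
    refine ge_of_tendsto hre_lim ?_
    filter_upwards [hIoo] with t ht
    rw [Function.comp_apply, show (F t - 1) / ((t : ℂ) - 1) = (1 - F t) / ((1 - t : ℝ) : ℂ) by
      push_cast; rw [← neg_div_neg_eq, neg_sub, neg_sub], div_ofReal_re, sub_re, one_re]
    have := (re_le_norm (F t)).trans_lt (mem_ball_zero_iff.1 (hFt t ht))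
    exact div_nonneg (by linarith) (by linarith [ht.2])
  refine hα₀.lt_of_ne fun hα0 => ?_
  have hbound : ∀ᶠ t : ℝ in 𝓝[<] 1,
      ‖1 + F t‖ ≤ 6 * ‖(1 + F 0) / (1 - F 0)‖ * ‖(F t - 1) / ((t : ℂ) - 1)‖ := by
    filter_upwards [hIoo] with t ht
    have hcayley := norm_ofReal_one_sub_mul_le_of_re_nonneg (differentiableOn_cayley hF hmaps)
      (fun _ => re_cayley_nonneg hmaps) norm_one ht
    have hF1 : F t ≠ 1 := fun h => by simpa [h] using hFt t ht
    have hq0 : (F t - 1) / ((t : ℂ) - 1) ≠ 0 :=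
      div_ne_zero (sub_ne_zero.2 hF1) (sub_ne_zero.2 (by exact_mod_cast ht.2.ne))
    rwa [mul_one, ofReal_one_sub_mul_cayley hF1 ht.2.ne, norm_div,
      div_le_iff₀ (norm_pos_iff.2 hq0)] at hcayley
  -- In the limit, `hbound` reads `2 ≤ 6 ‖(1 + F 0) / (1 - F 0)‖ · |α| = 0`.
  have hlimit := le_of_tendsto_of_tendsto
    ((continuous_norm.tendsto _).comp ((tendsto_const_nhds (x := (1 : ℂ))).add hF1))
    (tendsto_const_nhds.mul ((continuous_norm.tendsto _).comp hq)) hbound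
  rw [← hα0] at hlimit
  norm_num at hlimit

/-- Julia's lemma at the Denjoy–Wolff point: `F` maps every horodisc at `1` into itself. -/
theorem re_inv_one_sub_sub_inv_one_sub_nonneg (hF : DifferentiableOn ℂ F 𝔻)
    (hmaps : Set.MapsTo F 𝔻 𝔻) (hlim : AngularLimit F 1 1) {α : ℝ}
    (hα : AngularLimit (fun z => (F z - 1) / (z - 1)) 1 α) (hα1 : α ≤ 1) {z : ℂ} (hz : z ∈ 𝔻) :
    0 ≤ ((1 - F z)⁻¹ - (1 - z)⁻¹).re := by
  have hα0 := pos_of_angularLimit_deriv hF hmaps hlim hα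
  have hq := hα.tendsto_radial norm_one
  have hF1 := hlim.tendsto_radial norm_one
  have hresidue : Tendsto (fun t : ℝ => ((1 - t : ℝ) : ℂ) * ((1 + F (t * 1)) / (1 - F (t * 1))))
      (𝓝[<] 1) (𝓝 ((2 / α : ℝ) : ℂ)) := by
    refine (((tendsto_const_nhds (x := (1 : ℂ))).add hF1).div hq
      (ofReal_ne_zero.2 hα0.ne')).congr' ?_ |>.trans (by norm_num)
    filter_upwards [Ioo_mem_nhdsLT zero_lt_one] with t ht
    have hFt : F t ≠ 1 := fun h => by
      simpa [h] using hmaps (ofReal_mem_unitDisc ht)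
    simp only [Pi.div_apply, mul_one]
    rw [ofReal_one_sub_mul_cayley hFt ht.2.ne]
  have hjulia := mul_poissonKernel_le_re_of_tendsto (differentiableOn_cayley hF hmaps)
    (fun _ => re_cayley_nonneg hmaps) norm_one hresidue hz
  have hsplit : (1 - F z)⁻¹ - (1 - z)⁻¹
      = ((1 + F z) / (1 - F z) - (1 + z) / (1 - z)) / 2 := by
    have := sub_ne_zero_of_norm_eq_one norm_one (hmaps hz)
    have := sub_ne_zero_of_norm_eq_one norm_one hz
    field_simp
    ring
  rw [hsplit, div_ofNat_re, sub_re, re_add_div_sub_eq_poissonKernel 1 z]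
  have hP := poissonKernel_nonneg norm_one hz
  have : poissonKernel 0 z 1 ≤ 2 / α / 2 * poissonKernel 0 z 1 := by
    rw [div_div_cancel_left' two_ne_zero]
    exact le_mul_of_one_le_left hP (one_le_inv_iff₀.2 ⟨hα0, hα1⟩)
  linarith

lemma apply_ne_self_of_re_inv_one_sub_sub_inv_one_sub_nonneg
    (hF : DifferentiableOn ℂ F 𝔻) (hmaps : Set.MapsTo F 𝔻 𝔻)
    (hψ : ∀ z ∈ 𝔻, 0 ≤ ((1 - F z)⁻¹ - (1 - z)⁻¹).re) (hF0 : F 0 ≠ 0) {z : ℂ} (hz : z ∈ 𝔻) :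
    F z ≠ z := by
  intro hfix
  have hψd : DifferentiableOn ℂ (fun z => (1 - F z)⁻¹ - (1 - z)⁻¹) 𝔻 :=
    (((differentiableOn_const 1).sub hF).inv fun _ hu =>
      sub_ne_zero_of_norm_eq_one norm_one (hmaps hu)).sub
    (((differentiableOn_const 1).sub differentiableOn_id).inv fun _ hu =>
      sub_ne_zero_of_norm_eq_one norm_one hu)
  rcases re_pos_or_eqOn_const_of_re_nonneg isOpen_ball (convex_ball 0 1).isPreconnected hψd hψ
    with hpos | ⟨c, hc⟩
  · simpa [hfix] using hpos z hz
  · have h0 := hc 0 (mem_ball_self one_pos)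
    rw [← hc z hz, hfix, sub_self, sub_zero, inv_one, sub_eq_zero, inv_eq_one, sub_eq_self] at h0
    exact hF0 h0

lemma tendsto_radial_of_angularLimit_deriv {ζ : ℂ} (hζ : ‖ζ‖ = 1)
    (hfix : AngularLimit F ζ ζ) {d : ℝ} (hd : d ≠ 1)
    (hder : AngularLimit (fun z => (F z - ζ) / (z - ζ)) ζ d) :
    Tendsto (fun t : ℝ => ((1 - t : ℝ) : ℂ) * ((1 - t * ζ) * (1 - F (t * ζ)) / (F (t * ζ) - t * ζ)))
      (𝓝[<] 1) (𝓝 ((normSq (1 - ζ) / (d - 1) : ℝ) : ℂ)) := by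
  have hζ0 : ζ ≠ 0 := norm_ne_zero_iff.1 (hζ ▸ one_ne_zero)
  have hd' : (1 : ℂ) - d ≠ 0 := sub_ne_zero.2 (by exact_mod_cast hd.symm)
  have hlim := (((tendsto_const_nhds (x := (1 : ℂ))).sub (tendsto_ofReal_mul_nhdsLT_one ζ)).mul
    ((tendsto_const_nhds (x := (1 : ℂ))).sub (hfix.tendsto_radial hζ))).div
    ((tendsto_const_nhds (x := ζ)).mul
      ((tendsto_const_nhds (x := (1 : ℂ))).sub (hder.tendsto_radial hζ)))
    (mul_ne_zero hζ0 hd')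
  have hvalue : (1 - ζ) * (1 - ζ) / (ζ * (1 - d)) = ((normSq (1 - ζ) / (d - 1) : ℝ) : ℂ) := by
    have hconj : conj ζ = ζ⁻¹ := by
      rw [inv_def, normSq_eq_norm_sq, hζ]
      simp
    have hd'' : (d : ℂ) - 1 ≠ 0 := fun h => hd' (by linear_combination -h)
    rw [ofReal_div, ← mul_conj, map_sub, map_one, hconj]
    push_cast
    field_simp
    ring
  rw [← hvalue]
  refine hlim.congr' ?_
  filter_upwards [Ioo_mem_nhdsLT zero_lt_one] with t ht
  have h1t : ((1 - t : ℝ) : ℂ) ≠ 0 := ofReal_ne_zero.2 (by linarith [ht.2])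
  have hden : (t : ℂ) * ζ - ζ ≠ 0 := by
    rw [← sub_one_mul]
    exact mul_ne_zero (sub_ne_zero.2 (by exact_mod_cast ht.2.ne)) hζ0
  have hsplit : F (t * ζ) - t * ζ
      = ((1 - t : ℝ) : ℂ) * (ζ * (1 - (F (t * ζ) - ζ) / (t * ζ - ζ))) := by
    push_cast
    linear_combination -div_mul_cancel₀ (F (t * ζ) - ζ) hden
  rw [Pi.div_apply, hsplit, mul_div_assoc', mul_div_mul_left _ _ h1t]

end SelfMap

lemma one_sub_mul_one_sub_div_sub_eq_inv {z w : ℂ} (hz : z ≠ 1) (hw : w ≠ 1) :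
    (1 - z) * (1 - w) / (w - z) = ((1 - w)⁻¹ - (1 - z)⁻¹)⁻¹ := by
  rw [inv_sub_inv (sub_ne_zero.2 hw.symm) (sub_ne_zero.2 hz.symm), inv_div]
  ring_nf

theorem stmt13_general (N : ℕ) (F : ℂ → ℂ)
    (hF : DifferentiableOn ℂ F (ball (0:ℂ) 1))
    (hmaps : Set.MapsTo F (ball (0:ℂ) 1) (ball (0:ℂ) 1))
    (hlim1 : AngularLimit F 1 1)
    (α : ℝ) (hα : AngularLimit (fun z => (F z - 1) / (z - 1)) 1 (α : ℂ))
    (hα1 : α ≤ 1)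
    (hF0 : F 0 ≠ 0)
    (ζ : Fin N → ℂ) (hinj : Function.Injective ζ)
    (hζ : ∀ n, ‖ζ n‖ = 1)
    (hfix : ∀ n, AngularLimit F (ζ n) (ζ n))
    (d : Fin N → ℝ)
    (hder : ∀ n, AngularLimit (fun z => (F z - ζ n) / (z - ζ n)) (ζ n) ((d n : ℝ) : ℂ))
    (hd : ∀ n, 1 < d n) :
    (∑ n, ‖1 - ζ n‖ ^ 2 / (d n - 1)) ≤ 2 * (1 / F 0 - 1).re := by
  have hψ z (hz : z ∈ 𝔻) := re_inv_one_sub_sub_inv_one_sub_nonneg hF hmaps hlim1 hα hα1 hz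
  have hF1 z (hz : z ∈ 𝔻) : F z ≠ 1 := fun h => by simpa [h] using hmaps hz
  set Θ : ℂ → ℂ := fun z => (1 - z) * (1 - F z) / (F z - z)
  have hΘd : DifferentiableOn ℂ Θ 𝔻 :=
    (((differentiableOn_const 1).sub differentiableOn_id).mul
      ((differentiableOn_const 1).sub hF)).div (hF.sub differentiableOn_id) fun z hz =>
        sub_ne_zero.2 (apply_ne_self_of_re_inv_one_sub_sub_inv_one_sub_nonneg hF hmaps hψ hF0 hz)
  have hΘre : ∀ z ∈ 𝔻, 0 ≤ (Θ z).re := fun z hz => by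
    have hz1 : z ≠ 1 := fun h => by simp [h] at hz
    rw [show Θ z = _ from one_sub_mul_one_sub_div_sub_eq_inv hz1 (hF1 z hz), inv_re]
    exact div_nonneg (hψ z hz) (normSq_nonneg _)
  have hsum := sum_mul_poissonKernel_le_re univ hΘd hΘre (fun n _ => hζ n) hinj.injOn
    (fun n _ => tendsto_radial_of_angularLimit_deriv (hζ n) (hfix n) (hd n).ne' (hder n))
    (mem_ball_self one_pos)
  have hΘ0 : Θ 0 = 1 / F 0 - 1 := by
    simp only [Θ, sub_zero, one_mul]
    field_simp
  calc ∑ n, ‖1 - ζ n‖ ^ 2 / (d n - 1)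
      = 2 * ∑ n, normSq (1 - ζ n) / (d n - 1) / 2 * poissonKernel 0 0 (ζ n) := by
        simp [poissonKernel, hζ, mul_sum, normSq_eq_norm_sq, mul_div_cancel₀]
    _ ≤ 2 * (1 / F 0 - 1).re := by rw [← hΘ0]; linarith

/-- Theorem `t.P2`, inequality part: the parabolic-type
Cowen–Pommerenke inequality holds also for self-maps of hyperbolic type. -/
theorem stmt13 (N : ℕ) (F : ℂ → ℂ)
    (hF : DifferentiableOn ℂ F (ball (0:ℂ) 1))
    (hmaps : Set.MapsTo F (ball (0:ℂ) 1) (ball (0:ℂ) 1))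
    (hlim1 : AngularLimit F 1 1)
    (α : ℝ) (hα : AngularLimit (fun z => (F z - 1) / (z - 1)) 1 (α : ℂ))
    (hα1 : α ≤ 1)
    (hF0 : F 0 ≠ 0)
    (ζ : Fin N → ℂ) (hinj : Function.Injective ζ)
    (hζ : ∀ n, ‖ζ n‖ = 1) (hζ1 : ∀ n, ζ n ≠ 1)
    (hfix : ∀ n, AngularLimit F (ζ n) (ζ n))
    (d : Fin N → ℝ)
    (hder : ∀ n, AngularLimit (fun z => (F z - ζ n) / (z - ζ n)) (ζ n) ((d n : ℝ) : ℂ))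
    (hd : ∀ n, 1 < d n) :
    (∑ n, ‖1 - ζ n‖ ^ 2 / (d n - 1)) ≤ 2 * (1 / F 0 - 1).re :=
  stmt13_general N F hF hmaps hlim1 α hα hα1 hF0 ζ hinj hζ hfix d hder hd
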